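/- Let Y be a subgroup of ℚ with 2Y ≠ Y, and let f_1, f_2, f_3 be normalized positive definite functions on Y satisfying equation (S-D T): f_1(u_1+u_2+u_3)·f_2(u_1−u_2−u_3)·f_3(u_1+u_2−u_3) = f_1(u_1)f_1(u_2)f_1(u_3)·f_2(u_1)f_2(−u_2)f_2(−u_3)·f_3(u_1)f_3(u_2)f_3(−u_3) for all u_1, u_2, u_3 ∈ Y. Put N_i = {y ∈ Y : f_i(y) ≠ 0} and N = N_1 ∩ N_2 ∩ N_3. If N ≠ {0}, then N_1 = N_2 = N_3 = N. -/

import Mathlib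

/-!
On `N = N₁ ∩ N₂ ∩ N₃` the equation at `(u, -u, u)` reads `P = P · |f₁ u|² |f₂ u|² |f₃ u|²` with
`P ≠ 0`, so every `fᵢ` is unimodular on `N`; a normalized positive definite function of modulus
one at `x` satisfies `f (x + y) = f x f y`. The equation at `(a, ±b, 0)` and at `(u, 0, u)`,
`(u, -u, 0)`, `(0, u, -u)` shows that `N` is a subgroup and that `fᵢ (2u) ≠ 0` forces `u ∈ N`.
In `ℚ` a nonzero subgroup contains a positive multiple `m y` of every `y`; halving makes
`m = 2r + 1` odd, and then `fᵢ y ≠ 0` gives `fᵢ (2 (r + 1) y) = fᵢ (m y) fᵢ y ≠ 0`, so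
`(r + 1) y ∈ N` and `y = 2 (r + 1) y - m y ∈ N`.
-/

def IsPosDefFn {Y : Type*} [AddCommGroup Y] (f : Y → ℂ) : Prop :=
  ∀ (n : ℕ) (y : Fin n → Y) (c : Fin n → ℂ),
    0 ≤ (∑ i, ∑ j, f (y i - y j) * c i * (starRingEnd ℂ) (c j)).re ∧
    (∑ i, ∑ j, f (y i - y j) * c i * (starRingEnd ℂ) (c j)).im = 0

def SDTEq {Y : Type*} [AddCommGroup Y] (f₁ f₂ f₃ : Y → ℂ) : Prop :=
  ∀ u₁ u₂ u₃ : Y,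
    f₁ (u₁ + u₂ + u₃) * f₂ (u₁ - u₂ - u₃) * f₃ (u₁ + u₂ - u₃) =
      f₁ u₁ * f₁ u₂ * f₁ u₃ * (f₂ u₁ * f₂ (-u₂) * f₂ (-u₃)) *
        (f₃ u₁ * f₃ u₂ * f₃ (-u₃))

open ComplexConjugate Function

theorem eq_one_of_mul_eq_one_of_le_one {α : Type*} [Semiring α] [PartialOrder α]
    [IsOrderedRing α] {a b : α} (ha₀ : 0 ≤ a) (hb₀ : 0 ≤ b) (ha : a ≤ 1) (hb : b ≤ 1)
    (h : a * b = 1) : a = 1 ∧ b = 1 :=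
  ⟨le_antisymm ha (h ▸ mul_le_of_le_one_right ha₀ hb),
    le_antisymm hb (h ▸ mul_le_of_le_one_left hb₀ ha)⟩

namespace AddSubgroup

theorem mem_of_two_pow_nsmul_mem {G : Type*} [AddGroup G] {N : AddSubgroup G}
    (hhalf : ∀ u, u + u ∈ N → u ∈ N) (k : ℕ) {x : G} (hx : 2 ^ k • x ∈ N) : x ∈ N := by
  induction k generalizing x with
  | zero => simpa using hx
  | succ k ih => exact hhalf x (ih (by rwa [← two_nsmul, ← mul_nsmul', ← pow_succ]))

variable {G M₀ : Type*} [AddCommGroup G] [MonoidWithZero M₀] [NoZeroDivisors M₀]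
  {N : AddSubgroup G} {g : G → M₀}

theorem mem_of_odd_nsmul_mem (hmul : ∀ n ∈ N, ∀ v, g (n + v) = g n * g v)
    (hne : ∀ n ∈ N, g n ≠ 0) (hdbl : ∀ u, g (u + u) ≠ 0 → u ∈ N) {m : ℕ} (hm : Odd m) {y : G}
    (hmy : m • y ∈ N) (hy : g y ≠ 0) : y ∈ N := by
  obtain ⟨r, rfl⟩ := hm
  have hz : (r + 1) • y + (r + 1) • y = (2 * r + 1) • y + y := by
    rw [← add_nsmul, ← succ_nsmul]; ring_nf
  have hzN : (r + 1) • y ∈ N := hdbl _ (by rw [hz, hmul _ hmy]; exact mul_ne_zero (hne _ hmy) hy)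
  simpa [hz] using N.sub_mem (N.add_mem hzN hzN) hmy

theorem mem_of_nsmul_mem (hmul : ∀ n ∈ N, ∀ v, g (n + v) = g n * g v)
    (hne : ∀ n ∈ N, g n ≠ 0) (hdbl : ∀ u, g (u + u) ≠ 0 → u ∈ N) {m : ℕ} (hm : 0 < m) {y : G}
    (hmy : m • y ∈ N) (hy : g y ≠ 0) : y ∈ N := by
  obtain ⟨k, q, hq, rfl⟩ := Nat.exists_eq_two_pow_mul_odd hm.ne'
  refine mem_of_odd_nsmul_mem hmul hne hdbl hq ?_ hy
  exact mem_of_two_pow_nsmul_mem (fun u hu => hdbl u (hne _ hu)) k (by rwa [← mul_nsmul'])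

end AddSubgroup

theorem Rat.exists_nat_mul_eq_int_mul {x : ℚ} (hx : x ≠ 0) (y : ℚ) :
    ∃ m : ℕ, 0 < m ∧ ∃ k : ℤ, m * y = k * x := by
  refine ⟨y.den * x.num.natAbs, Nat.mul_pos y.den_pos (Int.natAbs_pos.2 (Rat.num_ne_zero.2 hx)),
    y.num * x.den * x.num.sign, ?_⟩
  have h : ((x.num.natAbs : ℤ) : ℚ) = x.num.sign * x.num := by
    rw [← Int.sign_mul_self x.num]; push_cast; ring
  rw [Int.cast_natCast] at h
  push_cast [h]
  calc (y.den : ℚ) * (x.num.sign * x.num) * y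
      = (y.den * y) * x.num.sign * x.num := by ring
    _ = y.num * x.num.sign * (x.den * x) := by rw [Rat.den_mul_eq_num, Rat.den_mul_eq_num]
    _ = _ := by ring

theorem AddSubgroup.exists_pos_nsmul_mem_of_ne_bot {Y : AddSubgroup ℚ} {H : AddSubgroup Y}
    (hH : H ≠ ⊥) (y : Y) : ∃ m : ℕ, 0 < m ∧ m • y ∈ H := by
  obtain ⟨⟨x, hxH⟩, hx⟩ := AddSubgroup.ne_bot_iff_exists_ne_zero.mp hH
  have hx0 : (x : ℚ) ≠ 0 := fun h => hx (Subtype.ext (Subtype.ext h))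
  obtain ⟨m, hm, k, hmk⟩ := Rat.exists_nat_mul_eq_int_mul hx0 y
  have : m • y = k • x := Subtype.ext (by simpa [nsmul_eq_mul, zsmul_eq_mul] using hmk)
  exact ⟨m, hm, this ▸ H.zsmul_mem hxH k⟩

namespace IsPosDefFn

variable {Y : Type*} [AddCommGroup Y] {f : Y → ℂ}

theorem map_neg (hf : IsPosDefFn f) (h0 : f 0 = 1) (u : Y) : f (-u) = conj (f u) := by
  have h1 := (hf 2 ![u, 0] ![1, 1]).2
  have h2 := (hf 2 ![u, 0] ![Complex.I, 1]).2
  simp [Fin.sum_univ_two, h0] at h1 h2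
  apply Complex.ext <;> simp <;> linarith

theorem normSq_le_one (hf : IsPosDefFn f) (h0 : f 0 = 1) (u : Y) :
    Complex.normSq (f u) ≤ 1 := by
  have h := (hf 2 ![u, 0] ![1, -f u]).1
  simp [Fin.sum_univ_two, h0, hf.map_neg h0] at h
  rw [Complex.normSq_apply]
  linarith

/-- The Gram form at `0, x, x + y` with coefficients `1, -conj (f x), -conj A` equals `-‖A‖²`,
where `A = f (x + y) - f x * f y`. -/
theorem map_add_of_normSq_eq_one (hf : IsPosDefFn f) (h0 : f 0 = 1) {x : Y}
    (hx : Complex.normSq (f x) = 1) (y : Y) : f (x + y) = f x * f y := by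
  set A := f (x + y) - f x * f y with hA
  have hxx : f x * conj (f x) = 1 := by rw [Complex.mul_conj, hx, Complex.ofReal_one]
  have h := (hf 3 ![0, x, x + y] ![1, -conj (f x), -conj A]).1
  have hgram : (∑ i, ∑ j, f (![0, x, x + y] i - ![0, x, x + y] j) *
      ![1, -conj (f x), -conj A] i * conj (![1, -conj (f x), -conj A] j)) = -(A * conj A) := by
    simp only [Fin.sum_univ_three, Matrix.cons_val_zero, Matrix.cons_val_one,
      Matrix.cons_val_two, Matrix.tail_cons, Matrix.head_cons, sub_self, sub_zero, zero_sub,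
      add_sub_cancel_left, sub_add_cancel_left, h0, hf.map_neg h0, hA, map_sub, map_mul,
      map_one, _root_.map_neg, Complex.conj_conj]
    linear_combination (-(1:ℂ)) * hxx
  rw [hgram, Complex.mul_conj] at h
  have hA0 : Complex.normSq A = 0 := le_antisymm (by simpa using h) (Complex.normSq_nonneg A)
  exact sub_eq_zero.mp (Complex.normSq_eq_zero.mp hA0)

theorem support_subset {N : AddSubgroup Y} (hf : IsPosDefFn f) (h0 : f 0 = 1)
    (hunit : ∀ n ∈ N, Complex.normSq (f n) = 1) (hdbl : ∀ u, f (u + u) ≠ 0 → u ∈ N)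
    (htors : ∀ y, ∃ m : ℕ, 0 < m ∧ m • y ∈ N) : support f ⊆ N := by
  intro y hy
  obtain ⟨m, hm, hmy⟩ := htors y
  have hne : ∀ n ∈ N, f n ≠ 0 := fun n hn h => by simpa [h] using hunit n hn
  exact N.mem_of_nsmul_mem (fun n hn => hf.map_add_of_normSq_eq_one h0 (hunit n hn)) hne hdbl
    hm hmy hy

end IsPosDefFn

def commonSupport {Y : Type*} (f₁ f₂ f₃ : Y → ℂ) : Set Y :=
  support f₁ ∩ support f₂ ∩ support f₃

theorem mem_commonSupport {Y : Type*} {f₁ f₂ f₃ : Y → ℂ} {y : Y} :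
    y ∈ commonSupport f₁ f₂ f₃ ↔ f₁ y ≠ 0 ∧ f₂ y ≠ 0 ∧ f₃ y ≠ 0 :=
  and_assoc

section CommonSupport

variable {Y : Type*} [AddCommGroup Y] {f₁ f₂ f₃ : Y → ℂ}

theorem neg_mem_commonSupport (hpd₁ : IsPosDefFn f₁) (hpd₂ : IsPosDefFn f₂)
    (hpd₃ : IsPosDefFn f₃) (hn₁ : f₁ 0 = 1) (hn₂ : f₂ 0 = 1) (hn₃ : f₃ 0 = 1) {u : Y}
    (hu : u ∈ commonSupport f₁ f₂ f₃) : -u ∈ commonSupport f₁ f₂ f₃ := by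
  simpa [mem_commonSupport, hpd₁.map_neg hn₁, hpd₂.map_neg hn₂, hpd₃.map_neg hn₃] using hu

namespace SDTEq

theorem mem_commonSupport_of_add_self (heq : SDTEq f₁ f₂ f₃) (hn₁ : f₁ 0 = 1) (hn₂ : f₂ 0 = 1)
    (hn₃ : f₃ 0 = 1) {u : Y} (hu : f₁ (u + u) ≠ 0 ∨ f₂ (u + u) ≠ 0 ∨ f₃ (u + u) ≠ 0) :
    u ∈ commonSupport f₁ f₂ f₃ := by
  have e₁ : f₁ (u + u) = f₁ u * f₁ u * (f₂ u * f₂ (-u)) * (f₃ u * f₃ (-u)) := by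
    simpa [hn₁, hn₂, hn₃] using heq u 0 u
  have e₂ : f₂ (u + u) = f₁ u * f₁ (-u) * (f₂ u * f₂ u) * (f₃ u * f₃ (-u)) := by
    simpa [hn₁, hn₂, hn₃] using heq u (-u) 0
  have e₃ : f₃ (u + u) = f₁ u * f₁ (-u) * (f₂ (-u) * f₂ u) * (f₃ u * f₃ u) := by
    simpa [hn₁, hn₂, hn₃] using heq 0 u (-u)
  rw [mem_commonSupport]
  rcases hu with h | h | h
  · rw [e₁] at h; simp only [mul_ne_zero_iff] at h; tauto
  · rw [e₂] at h; simp only [mul_ne_zero_iff] at h; tauto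
  · rw [e₃] at h; simp only [mul_ne_zero_iff] at h; tauto

theorem add_mem_commonSupport (heq : SDTEq f₁ f₂ f₃) (hpd₁ : IsPosDefFn f₁)
    (hpd₂ : IsPosDefFn f₂) (hpd₃ : IsPosDefFn f₃) (hn₁ : f₁ 0 = 1) (hn₂ : f₂ 0 = 1)
    (hn₃ : f₃ 0 = 1) {a b : Y} (ha : a ∈ commonSupport f₁ f₂ f₃)
    (hb : b ∈ commonSupport f₁ f₂ f₃) : a + b ∈ commonSupport f₁ f₂ f₃ := by
  have hb' := neg_mem_commonSupport hpd₁ hpd₂ hpd₃ hn₁ hn₂ hn₃ hb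
  rw [mem_commonSupport] at ha hb hb' ⊢
  have hplus := heq a b 0
  have hminus := heq a (-b) 0
  simp only [add_zero, sub_zero, neg_zero, neg_neg, sub_neg_eq_add, hn₁, hn₂, hn₃, mul_one]
    at hplus hminus
  have hplus' : f₁ (a + b) * f₂ (a - b) * f₃ (a + b) ≠ 0 := by
    rw [hplus]; simp only [ne_eq, mul_eq_zero, not_or]; tauto
  have hminus' : f₁ (a + -b) * f₂ (a + b) * f₃ (a + -b) ≠ 0 := by
    rw [hminus]; simp only [ne_eq, mul_eq_zero, not_or]; tauto
  simp only [ne_eq, mul_eq_zero, not_or] at hplus' hminus'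
  tauto

theorem normSq_eq_one_of_mem_commonSupport (heq : SDTEq f₁ f₂ f₃) (hpd₁ : IsPosDefFn f₁)
    (hpd₂ : IsPosDefFn f₂) (hpd₃ : IsPosDefFn f₃) (hn₁ : f₁ 0 = 1) (hn₂ : f₂ 0 = 1)
    (hn₃ : f₃ 0 = 1) {u : Y} (hu : u ∈ commonSupport f₁ f₂ f₃) :
    Complex.normSq (f₁ u) = 1 ∧ Complex.normSq (f₂ u) = 1 ∧ Complex.normSq (f₃ u) = 1 := by
  obtain ⟨h₁, h₂, h₃⟩ := mem_commonSupport.mp hu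
  set P := f₁ u * f₂ u * conj (f₃ u)
  have hP : P ≠ 0 := by simp [P, h₁, h₂, h₃]
  have h : P * ((Complex.normSq (f₁ u) * Complex.normSq (f₂ u) * Complex.normSq (f₃ u) : ℝ) : ℂ)
      = P * 1 := by
    have := heq u (-u) u
    simp only [add_neg_cancel, zero_add, sub_neg_eq_add, add_sub_cancel_right, zero_sub,
      neg_neg, hpd₁.map_neg hn₁, hpd₂.map_neg hn₂, hpd₃.map_neg hn₃] at this
    push_cast
    rw [← Complex.mul_conj, ← Complex.mul_conj, ← Complex.mul_conj]
    linear_combination -this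
  have hprod : Complex.normSq (f₁ u) * Complex.normSq (f₂ u) * Complex.normSq (f₃ u) = 1 := by
    exact_mod_cast mul_left_cancel₀ hP h
  obtain ⟨h₁₂, h₃⟩ := eq_one_of_mul_eq_one_of_le_one
    (mul_nonneg (Complex.normSq_nonneg _) (Complex.normSq_nonneg _)) (Complex.normSq_nonneg _)
    (mul_le_one₀ (hpd₁.normSq_le_one hn₁ u) (Complex.normSq_nonneg _) (hpd₂.normSq_le_one hn₂ u))
    (hpd₃.normSq_le_one hn₃ u) hprod
  obtain ⟨h₁, h₂⟩ := eq_one_of_mul_eq_one_of_le_one (Complex.normSq_nonneg _)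
    (Complex.normSq_nonneg _) (hpd₁.normSq_le_one hn₁ u) (hpd₂.normSq_le_one hn₂ u) h₁₂
  exact ⟨h₁, h₂, h₃⟩

def commonSupportAddSubgroup (heq : SDTEq f₁ f₂ f₃) (hpd₁ : IsPosDefFn f₁)
    (hpd₂ : IsPosDefFn f₂) (hpd₃ : IsPosDefFn f₃) (hn₁ : f₁ 0 = 1) (hn₂ : f₂ 0 = 1)
    (hn₃ : f₃ 0 = 1) : AddSubgroup Y where
  carrier := commonSupport f₁ f₂ f₃
  add_mem' := heq.add_mem_commonSupport hpd₁ hpd₂ hpd₃ hn₁ hn₂ hn₃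
  zero_mem' := mem_commonSupport.mpr (by simp [hn₁, hn₂, hn₃])
  neg_mem' := neg_mem_commonSupport hpd₁ hpd₂ hpd₃ hn₁ hn₂ hn₃

theorem support_subset_commonSupport (heq : SDTEq f₁ f₂ f₃) (hpd₁ : IsPosDefFn f₁)
    (hpd₂ : IsPosDefFn f₂) (hpd₃ : IsPosDefFn f₃) (hn₁ : f₁ 0 = 1) (hn₂ : f₂ 0 = 1)
    (hn₃ : f₃ 0 = 1) (htors : ∀ y : Y, ∃ m : ℕ, 0 < m ∧ m • y ∈ commonSupport f₁ f₂ f₃) :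
    support f₁ ⊆ commonSupport f₁ f₂ f₃ ∧ support f₂ ⊆ commonSupport f₁ f₂ f₃ ∧
      support f₃ ⊆ commonSupport f₁ f₂ f₃ := by
  let N := heq.commonSupportAddSubgroup hpd₁ hpd₂ hpd₃ hn₁ hn₂ hn₃
  have hunit := fun n (hn : n ∈ N) =>
    heq.normSq_eq_one_of_mem_commonSupport hpd₁ hpd₂ hpd₃ hn₁ hn₂ hn₃ hn
  have hdbl := fun u : Y => heq.mem_commonSupport_of_add_self hn₁ hn₂ hn₃ (u := u)
  exact ⟨hpd₁.support_subset hn₁ (fun n hn => (hunit n hn).1) (fun u h => hdbl u (.inl h)) htors,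
    hpd₂.support_subset hn₂ (fun n hn => (hunit n hn).2.1) (fun u h => hdbl u (.inr (.inl h)))
      htors,
    hpd₃.support_subset hn₃ (fun n hn => (hunit n hn).2.2) (fun u h => hdbl u (.inr (.inr h)))
      htors⟩

end SDTEq

end CommonSupport

theorem SDT_supports_coincide_of_N_ne_zero_general
    (Y : AddSubgroup ℚ)
    (f₁ f₂ f₃ : ↥Y → ℂ)
    (hpd₁ : IsPosDefFn f₁) (hpd₂ : IsPosDefFn f₂) (hpd₃ : IsPosDefFn f₃)
    (hn₁ : f₁ 0 = 1) (hn₂ : f₂ 0 = 1) (hn₃ : f₃ 0 = 1)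
    (heq : SDTEq f₁ f₂ f₃)
    (hN : {y : ↥Y | f₁ y ≠ 0} ∩ {y : ↥Y | f₂ y ≠ 0} ∩ {y : ↥Y | f₃ y ≠ 0} ≠ {0}) :
    {y : ↥Y | f₁ y ≠ 0} =
        {y : ↥Y | f₁ y ≠ 0} ∩ {y : ↥Y | f₂ y ≠ 0} ∩ {y : ↥Y | f₃ y ≠ 0} ∧
      {y : ↥Y | f₂ y ≠ 0} =
        {y : ↥Y | f₁ y ≠ 0} ∩ {y : ↥Y | f₂ y ≠ 0} ∩ {y : ↥Y | f₃ y ≠ 0} ∧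
      {y : ↥Y | f₃ y ≠ 0} =
        {y : ↥Y | f₁ y ≠ 0} ∩ {y : ↥Y | f₂ y ≠ 0} ∩ {y : ↥Y | f₃ y ≠ 0} := by
  let N := heq.commonSupportAddSubgroup hpd₁ hpd₂ hpd₃ hn₁ hn₂ hn₃
  have hN_ne_bot : N ≠ ⊥ := fun h => hN (by rw [← AddSubgroup.coe_bot, ← h]; rfl)
  obtain ⟨h₁, h₂, h₃⟩ := heq.support_subset_commonSupport hpd₁ hpd₂ hpd₃ hn₁ hn₂ hn₃
    (AddSubgroup.exists_pos_nsmul_mem_of_ne_bot hN_ne_bot)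
  exact ⟨h₁.antisymm fun _ hy => hy.1.1, h₂.antisymm fun _ hy => hy.1.2,
    h₃.antisymm fun _ hy => hy.2⟩

/-- Let `Y` be a subgroup of `ℚ` with `2Y ≠ Y` and `f₁, f₂, f₃` normalized positive
definite functions on `Y` satisfying (S-D T). If
`N = N₁ ∩ N₂ ∩ N₃ ≠ {0}`, where `Nᵢ = {y : fᵢ(y) ≠ 0}`, then `N₁ = N₂ = N₃ = N`. -/
theorem SDT_supports_coincide_of_N_ne_zero
    (Y : AddSubgroup ℚ)
    (h2Y : Y.map (AddMonoidHom.mulLeft (2 : ℚ)) ≠ Y)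
    (f₁ f₂ f₃ : ↥Y → ℂ)
    (hpd₁ : IsPosDefFn f₁) (hpd₂ : IsPosDefFn f₂) (hpd₃ : IsPosDefFn f₃)
    (hn₁ : f₁ 0 = 1) (hn₂ : f₂ 0 = 1) (hn₃ : f₃ 0 = 1)
    (heq : SDTEq f₁ f₂ f₃)
    (hN : {y : ↥Y | f₁ y ≠ 0} ∩ {y : ↥Y | f₂ y ≠ 0} ∩ {y : ↥Y | f₃ y ≠ 0} ≠ {0}) :
    {y : ↥Y | f₁ y ≠ 0} =
        {y : ↥Y | f₁ y ≠ 0} ∩ {y : ↥Y | f₂ y ≠ 0} ∩ {y : ↥Y | f₃ y ≠ 0} ∧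
      {y : ↥Y | f₂ y ≠ 0} =
        {y : ↥Y | f₁ y ≠ 0} ∩ {y : ↥Y | f₂ y ≠ 0} ∩ {y : ↥Y | f₃ y ≠ 0} ∧
      {y : ↥Y | f₃ y ≠ 0} =
        {y : ↥Y | f₁ y ≠ 0} ∩ {y : ↥Y | f₂ y ≠ 0} ∩ {y : ↥Y | f₃ y ≠ 0} :=
  SDT_supports_coincide_of_N_ne_zero_general Y f₁ f₂ f₃ hpd₁ hpd₂ hpd₃ hn₁ hn₂ hn₃ heq hN
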